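/- arXiv:2602.23449 — 2 statements merged into one kernel-verified Lean document; each statement's English description precedes it below -/
import Mathlib

section
/- Let β, γ, ρ, α, β_R, N > 0, S_∞ ∈ (0,1), and let sat : ℝ → ℝ be differentiable at 0 with sat(0) = 0. Let x₀ = (0, S₀, 0, 0, p_R0) with S₀ > 0. The transfer map 𝓥 : ℝ⁵ → ℝ⁵ of the aggregated SIR model, given in coordinates x = (I, S, R, p_S, p_R) with p_I = S + I + R by 𝓥(x) = (γI, βSI/p_I + β_R SR/p_I − ρ I sat(α p_S/N), β_R((1−S_∞)/S_∞) SR/p_I − γI, ρ I sat(α p_S/N), −(β_R/S_∞) SR/p_I), is Fréchet differentiable at x₀, and its Jacobian matrix at x₀ (rows indexed by components of 𝓥, columns by (I, S, R, p_S, p_R)) is: row 1 = (γ, 0, 0, 0, 0); row 2 = (β, 0, β_R, 0, 0); row 3 = (−γ, 0, β_R(1−S_∞)/S_∞, 0, 0); row 4 = (0, 0, 0, 0, 0); row 5 = (0, 0, −β_R/S_∞, 0, 0). -/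
/-!
At the disease-free equilibrium `I = R = 0`, every nonlinear entry of `𝓥` is a product of a
differentiable factor with a factor vanishing there, and the derivative of such a product is the
value of the first factor times the derivative of the second. Thus each incidence term
`c S X / p_I` (with `X = I` or `R`) linearizes to `c X`, because `S / p_I = 1` at the equilibrium,
and the treatment term `ρ I sat(α p_S / N)` has derivative `0`, because `I` and `sat 0` both vanish.
-/

open ContinuousLinearMap

theorem HasFDerivAt.mul_of_right_eq_zero {𝕜 E : Type*} [NontriviallyNormedField 𝕜]
    [NormedAddCommGroup E] [NormedSpace 𝕜 E] {q v : E → 𝕜} {v' : E →L[𝕜] 𝕜} {x : E}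
    (hq : DifferentiableAt 𝕜 q x) (hv : HasFDerivAt v v' x) (hv0 : v x = 0) :
    HasFDerivAt (fun y => q y * v y) (q x • v') x :=
  (hq.hasFDerivAt.fun_mul hv).congr_fderiv (by ext; simp [hv0])

theorem hasFDerivAt_incidence_DFE (c S₀ pR0 : ℝ) (hS₀ : S₀ ≠ 0) {j : Fin 5}
    (hj : (![0, S₀, 0, 0, pR0] : Fin 5 → ℝ) j = 0) :
    HasFDerivAt (fun x : Fin 5 → ℝ => c * x 1 * x j / (x 1 + x 0 + x 2))
      (c • (proj j : (Fin 5 → ℝ) →L[ℝ] ℝ)) ![0, S₀, 0, 0, pR0] := by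
  have hq : DifferentiableAt ℝ (fun x : Fin 5 → ℝ => c * x 1 / (x 1 + x 0 + x 2))
      ![0, S₀, 0, 0, pR0] := by
    fun_prop (disch := simpa using hS₀)
  have key := HasFDerivAt.mul_of_right_eq_zero hq (hasFDerivAt_apply (𝕜 := ℝ) j _) hj
  refine (key.congr_fderiv ?_).congr_of_eventuallyEq (.of_forall fun x => ?_)
  · simp [hS₀]
  · exact mul_div_right_comm _ _ _

theorem hasFDerivAt_treatment_DFE (ρ α N : ℝ) {sat : ℝ → ℝ} (hsat : DifferentiableAt ℝ sat 0)
    (hsat0 : sat 0 = 0) (S₀ pR0 : ℝ) :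
    HasFDerivAt (fun x : Fin 5 → ℝ => ρ * x 0 * sat (α * x 3 / N)) (0 : (Fin 5 → ℝ) →L[ℝ] ℝ)
      ![0, S₀, 0, 0, pR0] := by
  have hq : DifferentiableAt ℝ (fun x : Fin 5 → ℝ => sat (α * x 3 / N)) ![0, S₀, 0, 0, pR0] :=
    (show DifferentiableAt ℝ sat (α * (![0, S₀, 0, 0, pR0] : Fin 5 → ℝ) 3 / N) by
      simpa using hsat).comp ![0, S₀, 0, 0, pR0] (by fun_prop)
  have key := HasFDerivAt.mul_of_right_eq_zero hq
    ((hasFDerivAt_apply (𝕜 := ℝ) 0 ![0, S₀, 0, 0, pR0]).const_mul ρ) (by simp)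
  simp only [mul_comm (ρ * _)]
  exact key.congr_fderiv (by simp [hsat0])

theorem aggregated_transfer_hasFDerivAt_DFE_general
    (β γ ρ α βR N : ℝ)
    (S_inf : ℝ)
    (sat : ℝ → ℝ) (hsat : DifferentiableAt ℝ sat 0) (hsat0 : sat 0 = 0)
    (S₀ pR0 : ℝ) (hS₀ : 0 < S₀) :
    ∃ L : (Fin 5 → ℝ) →L[ℝ] (Fin 5 → ℝ),
      HasFDerivAt
        (fun x : Fin 5 → ℝ =>
          (![γ * x 0,
             β * x 1 * x 0 / (x 1 + x 0 + x 2) +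
               βR * x 1 * x 2 / (x 1 + x 0 + x 2) -
               ρ * x 0 * sat (α * x 3 / N),
             βR * ((1 - S_inf) / S_inf) * x 1 * x 2 / (x 1 + x 0 + x 2) - γ * x 0,
             ρ * x 0 * sat (α * x 3 / N),
             -(βR / S_inf) * x 1 * x 2 / (x 1 + x 0 + x 2)] : Fin 5 → ℝ))
        L (![0, S₀, 0, 0, pR0]) ∧
      ∀ h : Fin 5 → ℝ,
        L h = ![γ * h 0,
                β * h 0 + βR * h 2,
                -(γ * h 0) + βR * ((1 - S_inf) / S_inf) * h 2,
                0,
                -(βR / S_inf) * h 2] := by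
  let P (i : Fin 5) : (Fin 5 → ℝ) →L[ℝ] ℝ := proj i
  have incidence (c : ℝ) (j : Fin 5) (hj : (![0, S₀, 0, 0, pR0] : Fin 5 → ℝ) j = 0) :=
    hasFDerivAt_incidence_DFE c S₀ pR0 hS₀.ne' hj
  have treatment := hasFDerivAt_treatment_DFE ρ α N hsat hsat0 S₀ pR0
  have recovery := (hasFDerivAt_apply (𝕜 := ℝ) 0 ![0, S₀, 0, 0, pR0]).const_mul γ
  refine ⟨.pi ![γ • P 0, β • P 0 + βR • P 2, (βR * ((1 - S_inf) / S_inf)) • P 2 - γ • P 0, 0,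
    (-(βR / S_inf)) • P 2], hasFDerivAt_pi.2 fun i => ?_, fun h => ?_⟩
  · fin_cases i
    · exact recovery
    · exact (((incidence β 0 rfl).add (incidence βR 2 rfl)).sub treatment).congr_fderiv (sub_zero _)
    · exact (incidence _ 2 rfl).sub recovery
    · exact treatment
    · exact incidence _ 2 rfl
  · ext i
    fin_cases i <;> simp [P, neg_add_eq_sub]

/-- The transfer map 𝓥 of the aggregated SIR model, in coordinates
`x = (I, S, R, p_S, p_R)` with `p_I = S + I + R`, is Fréchet differentiable at the
disease-free equilibrium `x₀ = (0, S₀, 0, 0, p_R0)` and its Jacobian there is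
row 1 = (γ, 0, 0, 0, 0); row 2 = (β, 0, β_R, 0, 0);
row 3 = (−γ, 0, β_R(1−S_∞)/S_∞, 0, 0); row 4 = 0; row 5 = (0, 0, −β_R/S_∞, 0, 0). -/
theorem aggregated_transfer_hasFDerivAt_DFE
    (β γ ρ α βR N : ℝ) (hβ : 0 < β) (hγ : 0 < γ) (hρ : 0 < ρ)
    (hα : 0 < α) (hβR : 0 < βR) (hN : 0 < N)
    (S_inf : ℝ) (hS_inf : S_inf ∈ Set.Ioo (0 : ℝ) 1)
    (sat : ℝ → ℝ) (hsat : DifferentiableAt ℝ sat 0) (hsat0 : sat 0 = 0)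
    (S₀ pR0 : ℝ) (hS₀ : 0 < S₀) :
    ∃ L : (Fin 5 → ℝ) →L[ℝ] (Fin 5 → ℝ),
      HasFDerivAt
        (fun x : Fin 5 → ℝ =>
          (![γ * x 0,
             β * x 1 * x 0 / (x 1 + x 0 + x 2) +
               βR * x 1 * x 2 / (x 1 + x 0 + x 2) -
               ρ * x 0 * sat (α * x 3 / N),
             βR * ((1 - S_inf) / S_inf) * x 1 * x 2 / (x 1 + x 0 + x 2) - γ * x 0,
             ρ * x 0 * sat (α * x 3 / N),
             -(βR / S_inf) * x 1 * x 2 / (x 1 + x 0 + x 2)] : Fin 5 → ℝ))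
        L (![0, S₀, 0, 0, pR0]) ∧
      ∀ h : Fin 5 → ℝ,
        L h = ![γ * h 0,
                β * h 0 + βR * h 2,
                -(γ * h 0) + βR * ((1 - S_inf) / S_inf) * h 2,
                0,
                -(βR / S_inf) * h 2] :=
  aggregated_transfer_hasFDerivAt_DFE_general β γ ρ α βR N S_inf sat hsat hsat0 S₀ pR0 hS₀
end

section
/- (Final size relation) For every real number R₀ > 1 there exists a unique r ∈ (0, 1) satisfying the transcendental equation r = 1 − exp(−R₀ r). -/
/-!
Existence: `g r = 1 - exp (-R₀ r) - r` is positive at some small `c > 0` (since `exp x ≥ 1 + x` and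
`R₀ > 1`) and negative at `1`, so it vanishes in `(c, 1)` by the intermediate value theorem.
Uniqueness: two positive solutions `r < s` would put the three points `-R₀ s < -R₀ r < 0` of the
graph of `exp` on the line `u ↦ 1 + u / R₀`, which strict convexity of `exp` forbids.
-/

open Real Set

theorem StrictConvexOn.apply_ne_of_apply_eq_of_lt {s : Set ℝ} {f : ℝ → ℝ}
    (hf : StrictConvexOn ℝ s f) {m c x y z : ℝ} (hx : x ∈ s) (hz : z ∈ s) (hxy : x < y)
    (hyz : y < z) (hfx : f x = m * x + c) (hfz : f z = m * z + c) : f y ≠ m * y + c := by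
  intro hfy
  have hslopes := hf.slope_strict_mono_adjacent hx hz hxy hyz
  rw [hfx, hfy, hfz, show m * y + c - (m * x + c) = m * (y - x) by ring,
    show m * z + c - (m * y + c) = m * (z - y) by ring,
    mul_div_cancel_right₀ _ (sub_ne_zero_of_ne hxy.ne'),
    mul_div_cancel_right₀ _ (sub_ne_zero_of_ne hyz.ne')] at hslopes
  exact lt_irrefl m hslopes

theorem eq_of_eq_one_sub_exp_neg_mul {a r s : ℝ} (ha : 0 < a) (hr : 0 < r) (hs : 0 < s)
    (hr_eq : r = 1 - exp (-(a * r))) (hs_eq : s = 1 - exp (-(a * s))) : r = s := by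
  wlog hrs : r < s generalizing r s
  · rcases (not_lt.mp hrs).eq_or_lt with h | h
    · exact h.symm
    · exact (this hs hr hs_eq hr_eq h).symm
  have on_line {t : ℝ} (ht : t = 1 - exp (-(a * t))) :
      exp (-(a * t)) = a⁻¹ * -(a * t) + 1 := by
    field_simp
    linarith
  refine absurd (on_line hr_eq) (strictConvexOn_exp.apply_ne_of_apply_eq_of_lt (mem_univ _)
    (mem_univ 0) ?_ ?_ (on_line hs_eq) ?_)
  · nlinarith
  · nlinarith
  · simp

theorem exists_lt_one_sub_exp_neg_mul {a : ℝ} (ha : 1 < a) :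
    ∃ c ∈ Ioo (0 : ℝ) 1, c < 1 - exp (-(a * c)) := by
  -- any `c ∈ (0, 1 - 1 / a)` works; this is where `a > 1` enters
  set c := (1 - a⁻¹) / 2
  have ha₀ : 0 < a := one_pos.trans ha
  have hc₀ : 0 < c := by
    have : a⁻¹ < 1 := inv_lt_one_of_one_lt₀ ha
    simp only [c]; linarith
  have hc₁ : c < 1 := by
    have : 0 < a⁻¹ := inv_pos.mpr ha₀
    simp only [c]; linarith
  have hexp : exp (-(a * c)) * (1 + a * c) ≤ 1 := by
    rw [exp_neg, ← div_eq_inv_mul, div_le_one (exp_pos _), add_comm]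
    exact add_one_le_exp _
  have hprod : 1 < (1 - c) * (1 + a * c) := by
    simp only [c]; field_simp; nlinarith
  refine ⟨c, ⟨hc₀, hc₁⟩, ?_⟩
  nlinarith [mul_pos ha₀ hc₀]

/-- Final size relation: for every `R₀ > 1` there is a unique
`r ∈ (0, 1)` with `r = 1 − exp(−R₀ r)`. -/
theorem final_size_relation_existsUnique
    (R₀ : ℝ) (hR₀ : 1 < R₀) :
    ∃! r : ℝ, r ∈ Set.Ioo (0 : ℝ) 1 ∧ r = 1 - Real.exp (-(R₀ * r)) := by
  obtain ⟨c, hc, hc_lt⟩ := exists_lt_one_sub_exp_neg_mul hR₀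
  have hcont : Continuous fun x => 1 - exp (-(R₀ * x)) - x := by fun_prop
  obtain ⟨r, hr, hr_root⟩ := intermediate_value_Ioo' hc.2.le hcont.continuousOn
    (show (0 : ℝ) ∈ Ioo _ _ from ⟨by simp [exp_pos], by linarith⟩)
  refine ⟨r, ⟨⟨hc.1.trans hr.1, hr.2⟩, by linarith⟩, fun s ⟨hs, hs_eq⟩ => ?_⟩
  exact eq_of_eq_one_sub_exp_neg_mul (one_pos.trans hR₀) hs.1 (hc.1.trans hr.1) hs_eq
    (by linarith)
end
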